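/- arXiv:1503.04309 — 2 statements merged into one kernel-verified Lean document; each statement's English description precedes it below -/
import Mathlib

section
/- Let ξ1, ξ2, σ, h satisfy the marginally trapped Codazzi equations ξ1_{z̄} = e^{2u}(h_z + σh) - σ̄ξ2 and ξ2_{z̄} = e^{2u}(h_z + σh) - σ̄ξ1 on an open set U ⊂ C. Then (ξ1² - ξ2²)_{z̄} = 2e^{2u}(h_z + σh)(ξ1 - ξ2). In particular, if ξ1 - ξ2 is nowhere zero, then ξ1² - ξ2² is holomorphic if and only if h_z + σh = 0 identically. -/
open Complex

noncomputable section

/-- Lorentz inner product on ℝ⁵₁. -/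
def L (x y : Fin 5 → ℝ) : ℝ :=
  x 0 * y 0 + x 1 * y 1 + x 2 * y 2 + x 3 * y 3 - x 4 * y 4

/-- Complex-bilinear extension of the Lorentz form to ℂ⁵. -/
def LC (x y : Fin 5 → ℂ) : ℂ :=
  x 0 * y 0 + x 1 * y 1 + x 2 * y 2 + x 3 * y 3 - x 4 * y 4

/-- Wirtinger ∂/∂z of a real-valued function on ℂ. -/
def wzR (f : ℂ → ℝ) (z : ℂ) : ℂ :=
  (1/2) * ((fderiv ℝ f z 1 : ℂ) - Complex.I * (fderiv ℝ f z Complex.I : ℂ))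

/-- Wirtinger ∂/∂z̄ of a real-valued function on ℂ. -/
def wzbR (f : ℂ → ℝ) (z : ℂ) : ℂ :=
  (1/2) * ((fderiv ℝ f z 1 : ℂ) + Complex.I * (fderiv ℝ f z Complex.I : ℂ))

/-- Wirtinger ∂/∂z of a complex-valued function on ℂ. -/
def wzC (f : ℂ → ℂ) (z : ℂ) : ℂ :=
  (1/2) * (fderiv ℝ f z 1 - Complex.I * fderiv ℝ f z Complex.I)

/-- Wirtinger ∂/∂z̄ of a complex-valued function on ℂ. -/
def wzbC (f : ℂ → ℂ) (z : ℂ) : ℂ :=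
  (1/2) * (fderiv ℝ f z 1 + Complex.I * fderiv ℝ f z Complex.I)

/-- Componentwise Wirtinger ∂/∂z of an ℝ⁵-valued map. -/
def wzVR (F : ℂ → Fin 5 → ℝ) (z : ℂ) : Fin 5 → ℂ := fun j => wzR (fun w => F w j) z

/-- Componentwise Wirtinger ∂/∂z̄ of an ℝ⁵-valued map. -/
def wzbVR (F : ℂ → Fin 5 → ℝ) (z : ℂ) : Fin 5 → ℂ := fun j => wzbR (fun w => F w j) z

/-- Componentwise Wirtinger ∂/∂z of a ℂ⁵-valued map. -/
def wzVC (F : ℂ → Fin 5 → ℂ) (z : ℂ) : Fin 5 → ℂ := fun j => wzC (fun w => F w j) z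

/-- Coercion of a real vector to a complex vector. -/
def coeV (v : Fin 5 → ℝ) : Fin 5 → ℂ := fun j => (v j : ℂ)

lemma wzbC_mul {f g : ℂ → ℂ} {z : ℂ} (hf : DifferentiableAt ℝ f z)
    (hg : DifferentiableAt ℝ g z) :
    wzbC (fun w => f w * g w) z = f z * wzbC g z + wzbC f z * g z := by
  simp only [wzbC]
  rw [fderiv_fun_mul hf hg]
  simp only [ContinuousLinearMap.add_apply, ContinuousLinearMap.smul_apply, smul_eq_mul]
  ring

lemma wzbC_sub {f g : ℂ → ℂ} {z : ℂ} (hf : DifferentiableAt ℝ f z)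
    (hg : DifferentiableAt ℝ g z) :
    wzbC (fun w => f w - g w) z = wzbC f z - wzbC g z := by
  simp only [wzbC]
  rw [fderiv_fun_sub hf hg]
  simp only [ContinuousLinearMap.sub_apply]
  ring

theorem stmt7 (U : Set ℂ) (hU : IsOpen U) (ξ1 ξ2 σ : ℂ → ℂ) (h u : ℂ → ℝ)
    (hξ1 : ContDiffOn ℝ (⊤ : ℕ∞) ξ1 U) (hξ2 : ContDiffOn ℝ (⊤ : ℕ∞) ξ2 U) (hσ : ContDiffOn ℝ (⊤ : ℕ∞) σ U)
    (hh : ContDiffOn ℝ (⊤ : ℕ∞) h U) (hu : ContDiffOn ℝ (⊤ : ℕ∞) u U)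
    (hc1 : ∀ z ∈ U, wzbC ξ1 z
      = Complex.exp (2 * (u z : ℂ)) * (wzR h z + σ z * (h z : ℂ)) - (starRingEnd ℂ) (σ z) * ξ2 z)
    (hc2 : ∀ z ∈ U, wzbC ξ2 z
      = Complex.exp (2 * (u z : ℂ)) * (wzR h z + σ z * (h z : ℂ)) - (starRingEnd ℂ) (σ z) * ξ1 z) :
    (∀ z ∈ U, wzbC (fun w => ξ1 w ^ 2 - ξ2 w ^ 2) z
        = 2 * Complex.exp (2 * (u z : ℂ)) * (wzR h z + σ z * (h z : ℂ)) * (ξ1 z - ξ2 z)) ∧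
    ((∀ z ∈ U, ξ1 z - ξ2 z ≠ 0) →
      ((∀ z ∈ U, wzbC (fun w => ξ1 w ^ 2 - ξ2 w ^ 2) z = 0) ↔
        (∀ z ∈ U, wzR h z + σ z * (h z : ℂ) = 0))) := by
  have key : ∀ z ∈ U, wzbC (fun w => ξ1 w ^ 2 - ξ2 w ^ 2) z
      = 2 * Complex.exp (2 * (u z : ℂ)) * (wzR h z + σ z * (h z : ℂ)) * (ξ1 z - ξ2 z) := by
    intro z hz
    have d1 : DifferentiableAt ℝ ξ1 z :=
      (hξ1.contDiffAt (hU.mem_nhds hz)).differentiableAt (by simp)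
    have d2 : DifferentiableAt ℝ ξ2 z :=
      (hξ2.contDiffAt (hU.mem_nhds hz)).differentiableAt (by simp)
    have e1 : wzbC (fun w => ξ1 w ^ 2 - ξ2 w ^ 2) z
        = wzbC (fun w => ξ1 w * ξ1 w) z - wzbC (fun w => ξ2 w * ξ2 w) z := by
      have := wzbC_sub (f := fun w => ξ1 w * ξ1 w) (g := fun w => ξ2 w * ξ2 w)
        (z := z) (d1.mul d1) (d2.mul d2)
      simpa [pow_two] using this
    rw [e1, wzbC_mul d1 d1, wzbC_mul d2 d2, hc1 z hz, hc2 z hz]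
    ring
  refine ⟨key, fun hne => ⟨fun H z hz => ?_, fun H z hz => ?_⟩⟩
  · have := (key z hz).symm.trans (H z hz)
    have hexp : Complex.exp (2 * (u z : ℂ)) ≠ 0 := Complex.exp_ne_zero _
    have h' : (2 * Complex.exp (2 * (u z : ℂ))) * ((wzR h z + σ z * (h z : ℂ)) * (ξ1 z - ξ2 z)) = 0 := by
      rw [← this]; ring
    have h2 : (2 : ℂ) * Complex.exp (2 * (u z : ℂ)) ≠ 0 := mul_ne_zero two_ne_zero hexp
    rcases mul_eq_zero.mp h' with h'' | h''
    · exact absurd h'' h2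
    · rcases mul_eq_zero.mp h'' with h3 | h3
      · exact h3
      · exact absurd h3 (hne z hz)
  · rw [key z hz, H z hz]
    ring
end
end

section
/- Let κ, s, δ be smooth complex functions on an open set U ⊂ C with δ = c·h for real constants c ≠ 0, h, and suppose κ_{z̄z̄} + (s̄/2)κ = c·h·κ with κ real-valued. For λ on the unit circle define κ_λ = λ^{-2}κ, s_λ = s + 2(λ^{-2}-1)c·h, δ_λ = λ^{-2}δ. Then (κ_λ)_{z̄z̄} + (conj(s_λ)/2)·κ_λ = conj(λ^{-2})·c·h·κ_λ, the right-hand side equals c·h·κ and is real-valued, and hence Im( (κ_λ)_{z̄z̄} + (conj(s_λ)/2)κ_λ ) = 0 for all λ ∈ S¹. -/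
open Complex

noncomputable section

lemma fderiv_cmul' (a : ℂ) (ha : a ≠ 0) (f : ℂ → ℂ) (w : ℂ) :
    fderiv ℝ (fun x => a * f x) w = a • fderiv ℝ f w := by
  by_cases hf : DifferentiableAt ℝ f w
  · exact fderiv_const_mul hf a
  · rw [fderiv_zero_of_not_differentiableAt hf,
      fderiv_zero_of_not_differentiableAt, smul_zero]
    intro hg
    apply hf
    have : (fun x => a⁻¹ * (a * f x)) = f := by
      funext x; rw [inv_mul_cancel_left₀ ha]
    simpa [this] using hg.const_mul a⁻¹

lemma wzbC_cmul (a : ℂ) (ha : a ≠ 0) (f : ℂ → ℂ) (z : ℂ) :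
    wzbC (fun w => a * f w) z = a * wzbC f z := by
  unfold wzbC
  rw [fderiv_cmul' a ha]
  simp only [ContinuousLinearMap.smul_apply, smul_eq_mul]
  ring

lemma wzbC_wzbC_cmul (a : ℂ) (ha : a ≠ 0) (f : ℂ → ℂ) (z : ℂ) :
    wzbC (wzbC (fun w => a * f w)) z = a * wzbC (wzbC f) z := by
  have : wzbC (fun w => a * f w) = fun w => a * wzbC f w := by
    funext w; exact wzbC_cmul a ha f w
  rw [this, wzbC_cmul a ha]

theorem stmt10 (U : Set ℂ) (hU : IsOpen U) (κ s : ℂ → ℂ) (c h : ℝ) (hc : c ≠ 0)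
    (hκs : ContDiffOn ℝ (⊤ : ℕ∞) κ U) (hss : ContDiffOn ℝ (⊤ : ℕ∞) s U)
    (hreal : ∀ z ∈ U, (κ z).im = 0)
    (heq : ∀ z ∈ U, wzbC (wzbC κ) z + (starRingEnd ℂ) (s z) / 2 * κ z
      = ((c * h : ℝ) : ℂ) * κ z)
    (lam : ℂ) (hlam : ‖lam‖ = 1) :
    ∀ z ∈ U,
      wzbC (wzbC (fun w => lam⁻¹ ^ 2 * κ w)) z
          + (starRingEnd ℂ) (s z + 2 * (lam⁻¹ ^ 2 - 1) * ((c * h : ℝ) : ℂ)) / 2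
            * (lam⁻¹ ^ 2 * κ z)
        = (starRingEnd ℂ) (lam⁻¹ ^ 2) * ((c * h : ℝ) : ℂ) * (lam⁻¹ ^ 2 * κ z) ∧
      (starRingEnd ℂ) (lam⁻¹ ^ 2) * ((c * h : ℝ) : ℂ) * (lam⁻¹ ^ 2 * κ z)
        = ((c * h : ℝ) : ℂ) * κ z ∧
      ((starRingEnd ℂ) (lam⁻¹ ^ 2) * ((c * h : ℝ) : ℂ) * (lam⁻¹ ^ 2 * κ z)).im = 0 ∧
      (wzbC (wzbC (fun w => lam⁻¹ ^ 2 * κ w)) z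
          + (starRingEnd ℂ) (s z + 2 * (lam⁻¹ ^ 2 - 1) * ((c * h : ℝ) : ℂ)) / 2
            * (lam⁻¹ ^ 2 * κ z)).im = 0 := by
  intro z hz
  set a : ℂ := lam⁻¹ ^ 2 with hadef
  have hlam0 : lam ≠ 0 := by
    intro h0; rw [h0] at hlam; simp at hlam
  have ha : a ≠ 0 := by simp [hadef, hlam0]
  have habs : ‖a‖ = 1 := by
    simp [hadef, norm_pow, norm_inv, hlam]
  have hconj : (starRingEnd ℂ) a * a = 1 := by
    rw [Complex.conj_mul']
    norm_cast
    rw [habs]; norm_num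
  have h2 : (starRingEnd ℂ) a * ((c * h : ℝ) : ℂ) * (a * κ z) = ((c * h : ℝ) : ℂ) * κ z := by
    calc (starRingEnd ℂ) a * ((c * h : ℝ) : ℂ) * (a * κ z)
        = ((starRingEnd ℂ) a * a) * (((c * h : ℝ) : ℂ) * κ z) := by ring
      _ = ((c * h : ℝ) : ℂ) * κ z := by rw [hconj, one_mul]
  have h3 : ((starRingEnd ℂ) a * ((c * h : ℝ) : ℂ) * (a * κ z)).im = 0 := by
    rw [h2, Complex.mul_im, Complex.ofReal_im, Complex.ofReal_re, hreal z hz]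
    ring
  have h1 : wzbC (wzbC (fun w => a * κ w)) z
      + (starRingEnd ℂ) (s z + 2 * (a - 1) * ((c * h : ℝ) : ℂ)) / 2 * (a * κ z)
      = (starRingEnd ℂ) a * ((c * h : ℝ) : ℂ) * (a * κ z) := by
    rw [wzbC_wzbC_cmul a ha]
    have hk := heq z hz
    simp only [map_add, map_mul, map_sub, map_one, map_ofNat, Complex.conj_ofReal]
    have expand : a * wzbC (wzbC κ) z
        + ((starRingEnd ℂ) (s z) + 2 * ((starRingEnd ℂ) a - 1) * ((c * h : ℝ) : ℂ)) / 2
          * (a * κ z)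
        = a * (wzbC (wzbC κ) z + (starRingEnd ℂ) (s z) / 2 * κ z)
          + ((starRingEnd ℂ) a * a) * (((c * h : ℝ) : ℂ) * κ z)
          - a * (((c * h : ℝ) : ℂ) * κ z) := by ring
    rw [expand, hk, hconj, one_mul, h2]
    ring
  exact ⟨h1, h2, h3, by rw [h1]; exact h3⟩
end
end
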